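/- Every FAM mechanism admits a Nash equilibrium at every preference profile: given any stable matching μ of the true problem P, the profile P' in which each assigned student reports only μ(i) as acceptable and each unassigned student reports no school acceptable satisfies ψ(P') = μ and is a Nash equilibrium of the FAM mechanism ψ. -/

import Mathlib

open Finset
open scoped Classical

/-- A matching assigns each student a school or `none` (unassigned). -/
abbrev Matching (I S : Type*) := I → Option S

/-- An individual strict preference over `S ∪ {∅}`: an injective utility
function on `Option S` (higher value = more preferred, `none` = being
unassigned). -/
abbrev IndPref (S : Type*) := {f : Option S → ℕ // Function.Injective f}

/-- A preference profile: one strict preference per student. -/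
abbrev Prof (I S : Type*) := I → IndPref S

/-- Strict school priorities: for each school, an injective rank over
students (higher value = higher priority). -/
abbrev Prio (I S : Type*) := {p : S → I → ℕ // ∀ s, Function.Injective (p s)}

/-- A mechanism maps reported preference profiles to matchings. -/
abbrev Mechanism (I S : Type*) := Prof I S → Matching I S

variable {I S : Type*} [Fintype I] [DecidableEq I] [Fintype S] [DecidableEq S]

/-- Capacity feasibility. -/
def Feasible (q : S → ℕ) (μ : Matching I S) : Prop :=
  ∀ s : S, (univ.filter fun i => μ i = some s).card ≤ q s

/-- Individual rationality with respect to profile `P`. -/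
def IndivRational (P : Prof I S) (μ : Matching I S) : Prop :=
  ∀ i, (P i).1 none ≤ (P i).1 (μ i)

/-- Number of assigned students. -/
def msize (μ : Matching I S) : ℕ := (univ.filter fun i => μ i ≠ none).card

/-- Maximality: no feasible individually rational matching assigns strictly
more students. -/
def MaximalMatching (P : Prof I S) (q : S → ℕ) (μ : Matching I S) : Prop :=
  ∀ μ' : Matching I S, Feasible q μ' → IndivRational P μ' → msize μ' ≤ msize μ

/-- `μ'` Pareto dominates `μ`. -/
def Dominates (P : Prof I S) (μ' μ : Matching I S) : Prop :=
  (∀ i, (P i).1 (μ i) ≤ (P i).1 (μ' i)) ∧ ∃ j, (P j).1 (μ j) < (P j).1 (μ' j)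

/-- Pareto efficiency among feasible individually rational matchings. -/
def Efficient (P : Prof I S) (q : S → ℕ) (μ : Matching I S) : Prop :=
  ¬ ∃ μ', Feasible q μ' ∧ IndivRational P μ' ∧ Dominates P μ' μ

/-- Non-wastefulness. -/
def NonWasteful (P : Prof I S) (q : S → ℕ) (μ : Matching I S) : Prop :=
  ∀ i s, (P i).1 (μ i) < (P i).1 (some s) →
    (univ.filter fun j => μ j = some s).card = q s

/-- Fairness (no justified envy). -/
def Fair (P : Prof I S) (pr : Prio I S) (μ : Matching I S) : Prop :=
  ¬ ∃ i s j, (P i).1 (μ i) < (P i).1 (some s) ∧ μ j = some s ∧ pr.1 s j < pr.1 s i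

/-- Stability: individually rational, non-wasteful and fair. -/
def Stable (P : Prof I S) (pr : Prio I S) (q : S → ℕ) (μ : Matching I S) : Prop :=
  Feasible q μ ∧ IndivRational P μ ∧ NonWasteful P q μ ∧ Fair P pr μ

/-- Fairness for unassigned students. -/
def FairForUnassigned (P : Prof I S) (pr : Prio I S) (μ : Matching I S) : Prop :=
  ¬ ∃ i s j, μ i = none ∧ (P i).1 none < (P i).1 (some s) ∧ μ j = some s ∧
    pr.1 s j < pr.1 s i

/-- `(a, t)` is an improving chain for `μ`: each student `a k` strictly
prefers `t k` to their assignment, each school `t k` (for `k < n`) is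
currently occupied by the next student `a (k+1)`, and the last school has
excess capacity. -/
def IsImpChain (P : Prof I S) (q : S → ℕ) (μ : Matching I S)
    (n : ℕ) (a : Fin (n + 1) → I) (t : Fin (n + 1) → S) : Prop :=
  Function.Injective a ∧
  (∀ k, (P (a k)).1 (μ (a k)) < (P (a k)).1 (some (t k))) ∧
  (∀ k : Fin n, μ (a k.succ) = some (t k.castSucc)) ∧
  (univ.filter fun j => μ j = some (t (Fin.last n))).card < q (t (Fin.last n))

/-- `(a, t)` is an improving cycle for `μ`: each student `a k` is assigned
to `t k` and strictly prefers the school `t (k+1)` vacated by the next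
student in the cycle. -/
def IsImpCycle (P : Prof I S) (μ : Matching I S)
    (n : ℕ) (a : Fin (n + 1) → I) (t : Fin (n + 1) → S) : Prop :=
  Function.Injective a ∧
  (∀ k, μ (a k) = some (t k)) ∧
  (∀ k, (P (a k)).1 (some (t k)) < (P (a k)).1 (some (t (k + 1))))

def HasImpChain (P : Prof I S) (q : S → ℕ) (μ : Matching I S) : Prop :=
  ∃ n a t, IsImpChain P q μ n a t

def HasImpCycle (P : Prof I S) (μ : Matching I S) : Prop :=
  ∃ n a t, IsImpCycle P μ n a t

/-- Implementing one improving chain or cycle: every student involved moves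
to the school they prefer in the chain/cycle, all others keep their
assignment. -/
def ImplementStep (P : Prof I S) (q : S → ℕ) (μ μ' : Matching I S) : Prop :=
  (∃ n a t, IsImpChain P q μ n a t ∧ (∀ k, μ' (a k) = some (t k)) ∧
    ∀ j, (∀ k, j ≠ a k) → μ' j = μ j) ∨
  (∃ n a t, IsImpCycle P μ n a t ∧ (∀ k, μ' (a k) = some (t (k + 1))) ∧
    ∀ j, (∀ k, j ≠ a k) → μ' j = μ j)

/-- One refinement step of the first stage of EAM: keep only the matchings
assigning student `i`, whenever such matchings exist. -/
noncomputable def xiStep (A : Set (Matching I S)) (i : I) : Set (Matching I S) :=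
  if ∃ μ ∈ A, μ i ≠ none then {μ ∈ A | μ i ≠ none} else A

/-- The set `ξ^n` of the first stage of EAM, for the enumeration `L` of the
students, starting from all feasible individually rational matchings. -/
noncomputable def xiList (P : Prof I S) (q : S → ℕ) (L : List I) :
    Set (Matching I S) :=
  L.foldl xiStep {μ | Feasible q μ ∧ IndivRational P μ}

/-- `μ` is a possible outcome of an EAM procedure with student enumeration
`L`: it is reachable from some matching selected in the first stage by
implementing improving chains/cycles, and admits no further improving chain
or cycle. -/
def IsEAMOutcome (P : Prof I S) (q : S → ℕ) (L : List I) (μ : Matching I S) :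
    Prop :=
  ∃ μ₀ ∈ xiList P q L, Relation.ReflTransGen (ImplementStep P q) μ₀ μ ∧
    ¬ HasImpChain P q μ ∧ ¬ HasImpCycle P μ

/-- EAM mechanisms with enumeration `L`. -/
def IsEAMMech (q : S → ℕ) (L : List I) (ψ : Mechanism I S) : Prop :=
  ∀ P, IsEAMOutcome P q L (ψ P)

/-- One sub-step of Step 2 of FAM: a pair `(i, s)` violating fairness for
unassigned students is resolved by placing `i` at `s` and unassigning the
lowest-priority student currently matched to `s`. -/
def FairStep (P : Prof I S) (pr : Prio I S) (μ μ' : Matching I S) : Prop :=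
  ∃ i s j, μ i = none ∧ (P i).1 none < (P i).1 (some s) ∧ μ j = some s ∧
    pr.1 s j < pr.1 s i ∧ (∀ j', μ j' = some s → pr.1 s j ≤ pr.1 s j') ∧
    μ' = Function.update (Function.update μ j none) i (some s)

/-- FAM mechanisms: an EAM first stage followed by iterated resolution of
violations of fairness for unassigned students. -/
def IsFAMMech (q : S → ℕ) (pr : Prio I S) (L : List I) (ψ : Mechanism I S) :
    Prop :=
  ∀ P, ∃ μ₁, IsEAMOutcome P q L μ₁ ∧
    Relation.ReflTransGen (FairStep P pr) μ₁ (ψ P) ∧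
    FairForUnassigned P pr (ψ P)

/-- Individually rational mechanism (with respect to reports). -/
def IRMech (q : S → ℕ) (ψ : Mechanism I S) : Prop :=
  ∀ P, Feasible q (ψ P) ∧ IndivRational P (ψ P)

/-- MaximalMatching mechanism. -/
def MaximalMech (q : S → ℕ) (ψ : Mechanism I S) : Prop :=
  IRMech q ψ ∧ ∀ P, MaximalMatching P q (ψ P)

/-- Nash equilibrium of the preference-reporting game induced by `ψ`, with
true preferences `u`. -/
def NashEq (u : Prof I S) (ψ : Mechanism I S) (P' : Prof I S) : Prop :=
  ∀ (i : I) (Pi'' : IndPref S),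
    (u i).1 (ψ (Function.update P' i Pi'') i) ≤ (u i).1 (ψ P' i)

/-- Strategy-proofness. -/
def StrategyProof (ψ : Mechanism I S) : Prop :=
  ∀ (P : Prof I S) (i : I) (Pi' : IndPref S),
    (P i).1 (ψ (Function.update P i Pi') i) ≤ (P i).1 (ψ P i)

/-- A maximizer of `f` on the nonempty finite set `A`. -/
noncomputable def bestOf (f : Option S → ℕ) (A : Finset (Option S))
    (h : A.Nonempty) : Option S :=
  (Finset.exists_max_image A f h).choose

/-- Serial dictatorship: students pick, in the order given, their most
preferred option among `none` and the schools with remaining capacity. -/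
noncomputable def sdRun (P : Prof I S) :
    List I → (S → ℕ) → Matching I S → Matching I S
  | [], _, μ => μ
  | i :: rest, rem, μ =>
    let c := bestOf (P i).1 (insert none ((univ.filter fun s => 0 < rem s).image some))
      (insert_nonempty _ _)
    sdRun P rest (fun s => if c = some s then rem s - 1 else rem s)
      (Function.update μ i c)

/-- The serial dictatorship outcome with ordering `L` and capacities `q`. -/
noncomputable def SD (P : Prof I S) (q : S → ℕ) (L : List I) : Matching I S :=
  sdRun P L q fun _ => none


variable {I S : Type*} [Fintype I] [DecidableEq I] [Fintype S] [DecidableEq S]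

/-! Under the report profile `P'`, every individually rational matching sends each student
either to nothing or to their school under `μ`; assigning a student can only help in the first
stage of FAM, so that stage selects `μ`, which then admits no improvement and no unfair pair.
If a student `i` deviates and obtains a school `s` they truly prefer to `μ i`, then `s` is full
under `μ` by non-wastefulness, so some student `j` of `s` under `μ` loses their seat and, having
reported only `s`, ends up unassigned. Fairness for unassigned students of the outcome forces
`j` to have lower priority at `s` than `i`, so `i` has justified envy towards `j` in `μ`,
contradicting the stability of `μ`. -/

section Matching

variable {I S : Type*}

lemma Equiv.Perm.exists_apply_eq_add_one {n : ℕ} {a : Fin (n + 1) → I}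
    (ha : Function.Injective a) :
    ∃ σ : Equiv.Perm I, (∀ k, σ (a k) = a (k + 1)) ∧ ∀ j, (∀ k, j ≠ a k) → σ j = j := by
  classical
  refine ⟨(finRotate (n + 1)).extendDomain (Equiv.ofInjective a ha), fun k => ?_, fun j hj => ?_⟩
  · simpa [finRotate_apply] using
      (finRotate (n + 1)).extendDomain_apply_image (Equiv.ofInjective a ha) k
  · exact Equiv.Perm.extendDomain_apply_not_subtype _ _ fun ⟨k, hk⟩ => hj k hk.symm

lemma Finset.exists_mem_notMem_of_card_le_of_mem_notMem {α : Type*} {s t : Finset α} {x : α}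
    (hcard : #t ≤ #s) (hxt : x ∈ t) (hxs : x ∉ s) : ∃ y ∈ s, y ∉ t := by
  by_contra! hst
  exact (Finset.card_lt_card (Finset.ssubset_iff_subset_ne.2
    ⟨hst, fun e => hxs (e ▸ hxt)⟩)).not_ge hcard

variable [Fintype I] [DecidableEq S] {q : S → ℕ} {μ ν : Matching I S}

lemma card_filter_comp_perm (μ : Matching I S) (σ : Equiv.Perm I) (s : S) :
    #(univ.filter fun j => (μ ∘ σ) j = some s) = #(univ.filter fun j => μ j = some s) :=
  Finset.card_equiv σ (by simp)

lemma Feasible.comp_perm (h : Feasible q μ) (σ : Equiv.Perm I) : Feasible q (μ ∘ σ) :=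
  fun s => card_filter_comp_perm μ σ s ▸ h s

lemma Feasible.update_some [DecidableEq I] (h : Feasible q μ) {s : S}
    (hs : #(univ.filter fun j => μ j = some s) < q s) (x : I) :
    Feasible q (Function.update μ x (some s)) := by
  intro s'
  by_cases hss' : s = s'
  · subst hss'
    have hsub : (univ.filter fun j => Function.update μ x (some s) j = some s) ⊆
        insert x (univ.filter fun j => μ j = some s) := by
      intro j
      rcases eq_or_ne j x with rfl | hjx <;> simp_all
    exact (Finset.card_le_card hsub).trans (Finset.card_insert_le _ _) |>.trans hs
  · refine le_trans (Finset.card_le_card fun j => ?_) (h s')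
    rcases eq_or_ne j x with rfl | hjx <;> simp_all

lemma Feasible.exists_displaced (hν : Feasible q ν) {s : S}
    (hfull : #(univ.filter fun j => μ j = some s) = q s) {i : I} (hνi : ν i = some s)
    (hμi : μ i ≠ some s) : ∃ j, μ j = some s ∧ ν j ≠ some s := by
  obtain ⟨j, hj, hjν⟩ := Finset.exists_mem_notMem_of_card_le_of_mem_notMem
    (hfull ▸ hν s) (by simpa using hνi) (by simpa using hμi)
  exact ⟨j, by simpa using hj, by simpa using hjν⟩

end Matching

section Mechanism

variable {I S : Type*} {P : Prof I S} {μ μ' : Matching I S}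

lemma IndivRational.of_le (h : IndivRational P μ)
    (hle : ∀ i, (P i).1 (μ i) ≤ (P i).1 (μ' i)) : IndivRational P μ' :=
  fun i => (h i).trans (hle i)

lemma xiStep_subset [Fintype I] [DecidableEq I] [Fintype S] (A : Set (Matching I S)) (i : I) :
    xiStep A i ⊆ A := by
  unfold xiStep
  split_ifs
  exacts [Set.sep_subset _ _, subset_rfl]

lemma foldl_xiStep_subset [Fintype I] [DecidableEq I] [Fintype S] (L : List I)
    (A : Set (Matching I S)) :
    L.foldl xiStep A ⊆ A := by
  induction L generalizing A with
  | nil => exact subset_rfl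
  | cons i L ih => exact (ih _).trans (xiStep_subset A i)

lemma FairStep.indivRational [DecidableEq I] {pr : Prio I S} (h : FairStep P pr μ μ')
    (hμ : IndivRational P μ) : IndivRational P μ' := by
  obtain ⟨i, s, j, -, hacc, -, -, -, rfl⟩ := h
  intro x
  rcases eq_or_ne x i with rfl | hxi
  · simpa using hacc.le
  rcases eq_or_ne x j with rfl | hxj
  · simp [hxi]
  · simpa [hxi, hxj] using hμ x

variable [Fintype I] [DecidableEq S] {q : S → ℕ}

lemma ImplementStep.le (h : ImplementStep P q μ μ') (i : I) :
    (P i).1 (μ i) ≤ (P i).1 (μ' i) := by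
  rcases h with ⟨n, a, t, ⟨-, hpref, -, -⟩, hnew, hrest⟩ |
    ⟨n, a, t, ⟨-, hμa, hpref⟩, hnew, hrest⟩
  · by_cases hi : ∃ k, i = a k
    · obtain ⟨k, rfl⟩ := hi
      exact hnew k ▸ (hpref k).le
    · rw [hrest i fun k hk => hi ⟨k, hk⟩]
  · by_cases hi : ∃ k, i = a k
    · obtain ⟨k, rfl⟩ := hi
      rw [hnew k, hμa k]
      exact (hpref k).le
    · rw [hrest i fun k hk => hi ⟨k, hk⟩]

/-- Implementing a cycle permutes the seats; implementing a chain permutes them and then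
moves its last student into the school with a vacancy. -/
lemma ImplementStep.feasible (h : ImplementStep P q μ μ') (hμ : Feasible q μ) :
    Feasible q μ' := by
  rcases h with ⟨n, a, t, ⟨ha, -, hnext, hvacant⟩, hnew, hrest⟩ |
    ⟨n, a, t, ⟨ha, hμa, -⟩, hnew, hrest⟩
  · obtain ⟨σ, hσa, hσ⟩ := Equiv.Perm.exists_apply_eq_add_one ha
    have hμ' : μ' = Function.update (μ ∘ σ) (a (Fin.last n)) (some (t (Fin.last n))) := by
      funext j
      by_cases hj : ∃ k, j = a k
      · obtain ⟨k, rfl⟩ := hj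
        rcases Fin.eq_castSucc_or_eq_last k with ⟨m, rfl⟩ | rfl
        · rw [Function.update_of_ne (ha.ne (Fin.castSucc_ne_last m)), Function.comp_apply,
            hσa, Fin.coeSucc_eq_succ, hnext, hnew]
        · rw [Function.update_self, hnew]
      · have hj' : ∀ k, j ≠ a k := fun k hk => hj ⟨k, hk⟩
        rw [Function.update_of_ne (hj' _), Function.comp_apply, hσ j hj', hrest j hj']
    rw [hμ']
    exact (hμ.comp_perm σ).update_some (by rwa [card_filter_comp_perm]) _
  · obtain ⟨σ, hσa, hσ⟩ := Equiv.Perm.exists_apply_eq_add_one ha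
    have hμ' : μ' = μ ∘ σ := by
      funext j
      by_cases hj : ∃ k, j = a k
      · obtain ⟨k, rfl⟩ := hj
        rw [Function.comp_apply, hσa, hnew, hμa]
      · have hj' : ∀ k, j ≠ a k := fun k hk => hj ⟨k, hk⟩
        rw [Function.comp_apply, hσ j hj', hrest j hj']
    exact hμ' ▸ hμ.comp_perm σ

variable [DecidableEq I] {pr : Prio I S}

/-- A fair step swaps the seats of the unassigned student `i` and of the student `j` it evicts. -/
lemma FairStep.feasible (h : FairStep P pr μ μ') (hμ : Feasible q μ) : Feasible q μ' := by
  obtain ⟨i, s, j, hi, -, hj, -, -, rfl⟩ := h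
  have hij : i ≠ j := by rintro rfl; simp_all
  convert hμ.comp_perm (Equiv.swap i j) using 1
  funext x
  rcases eq_or_ne x i with rfl | hxi
  · simp [hj]
  rcases eq_or_ne x j with rfl | hxj
  · simp [hxi, hi]
  · simp [hxi, hxj, Equiv.swap_apply_of_ne_of_ne]

variable [Fintype S] {L : List I} {ψ : Mechanism I S}

lemma IsFAMMech.irMech (hψ : IsFAMMech q pr L ψ) : IRMech q ψ := by
  intro P
  obtain ⟨μ₁, ⟨μ₀, hμ₀, himp, -, -⟩, hfair, -⟩ := hψ P
  have hμ₁ : Feasible q μ₁ ∧ IndivRational P μ₁ := by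
    clear hfair
    induction himp with
    | refl => exact foldl_xiStep_subset L _ hμ₀
    | tail _ hstep ih => exact ⟨hstep.feasible ih.1, ih.2.of_le hstep.le⟩
  generalize ψ P = ν at hfair ⊢
  induction hfair with
  | refl => exact hμ₁
  | tail _ hstep ih => exact ⟨hstep.feasible ih.1, hstep.indivRational ih.2⟩

lemma IsFAMMech.fairForUnassigned (hψ : IsFAMMech q pr L ψ) (P : Prof I S) :
    FairForUnassigned P pr (ψ P) :=
  (hψ P).choose_spec.2.2

end Mechanism

/-- The equilibrium report profile `P'` of the paper. -/
def AcceptsOnly {I S : Type*} (P : Prof I S) (μ : Matching I S) : Prop :=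
  ∀ i s, (P i).1 none < (P i).1 (some s) ↔ some s = μ i

namespace AcceptsOnly

variable {I S : Type*} {P : Prof I S} {μ ν : Matching I S}

lemma eq_none_or_eq (h : AcceptsOnly P μ) {i : I} {o : Option S}
    (ho : (P i).1 none ≤ (P i).1 o) : o = none ∨ o = μ i := by
  rcases o with _ | s
  · exact Or.inl rfl
  · rcases ho.lt_or_eq with hlt | heq
    · exact Or.inr ((h i s).1 hlt)
    · cases (P i).2 heq

lemma indivRational (h : AcceptsOnly P μ) : IndivRational P μ := by
  intro i
  rcases hμi : μ i with _ | s
  · exact le_rfl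
  · exact ((h i s).2 hμi.symm).le

lemma not_lt (h : AcceptsOnly P μ) (i : I) (s : S) : ¬ (P i).1 (μ i) < (P i).1 (some s) := by
  intro hlt
  have hs := (h i s).1 ((h.indivRational i).trans_lt hlt)
  exact hlt.ne (by rw [hs])

lemma not_implementStep [Fintype I] [DecidableEq S] (h : AcceptsOnly P μ) (q : S → ℕ) :
    ¬ ImplementStep P q μ ν := by
  rintro (⟨n, a, t, ⟨-, hpref, -, -⟩, -⟩ | ⟨n, a, t, ⟨-, hμa, hpref⟩, -⟩)
  · exact h.not_lt _ _ (hpref 0)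
  · exact h.not_lt _ _ (hμa 0 ▸ hpref 0)

lemma not_fairStep [DecidableEq I] (h : AcceptsOnly P μ) (pr : Prio I S) :
    ¬ FairStep P pr μ ν := by
  rintro ⟨i, s, -, hi, hacc, -⟩
  simpa [hi] using (h i s).1 hacc

/-- Among matchings individually rational for `P` and containing `μ`, a student `i` is assigned
by some matching exactly when `μ i ≠ none`, so the refinement step filters by that. -/
lemma foldl_xiStep [Fintype I] [DecidableEq I] [Fintype S] (h : AcceptsOnly P μ) (L : List I)
    {A : Set (Matching I S)} (hA : ∀ ν ∈ A, IndivRational P ν) (hμ : μ ∈ A) :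
    L.foldl xiStep A = {ν ∈ A | ∀ i ∈ L, μ i ≠ none → ν i ≠ none} := by
  induction L generalizing A with
  | nil => simp
  | cons i L ih =>
    have hstep : xiStep A i = {ν ∈ A | μ i ≠ none → ν i ≠ none} := by
      by_cases hμi : μ i = none
      · have hnone : ¬ ∃ ν ∈ A, ν i ≠ none := by
          rintro ⟨ν, hν, hνi⟩
          exact hνi ((h.eq_none_or_eq (hA ν hν i)).resolve_right (hμi ▸ hνi))
        simp [xiStep, hnone, hμi]
      · simp [xiStep, show ∃ ν ∈ A, ν i ≠ none from ⟨μ, hμ, hμi⟩, hμi]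
    rw [List.foldl_cons, hstep, ih (A := {ν ∈ A | μ i ≠ none → ν i ≠ none}) (fun ν hν => hA ν hν.1)
      ⟨hμ, id⟩]
    ext ν
    simp only [Set.mem_ofPred_eq, List.mem_cons, forall_eq_or_imp]
    tauto

lemma xiList_eq [Fintype I] [DecidableEq I] [Fintype S] [DecidableEq S] (h : AcceptsOnly P μ)
    {q : S → ℕ} (hμ : Feasible q μ) {L : List I} (hL : ∀ i, i ∈ L) :
    xiList P q L = {μ} := by
  rw [xiList, h.foldl_xiStep L (A := {ν | Feasible q ν ∧ IndivRational P ν}) (fun ν hν => hν.2)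
    ⟨hμ, h.indivRational⟩]
  ext ν
  constructor
  · rintro ⟨⟨-, hν⟩, hassigned⟩
    funext i
    rcases h.eq_none_or_eq (hν i) with hνi | hνi
    · by_contra hne
      exact hassigned i (hL i) (hνi ▸ Ne.symm hne) hνi
    · exact hνi
  · rintro rfl
    exact ⟨⟨hμ, h.indivRational⟩, fun _ _ => id⟩

variable [Fintype I] [DecidableEq I] [Fintype S] [DecidableEq S] {q : S → ℕ} {pr : Prio I S}
  {L : List I} {ψ : Mechanism I S}

lemma famMech_apply_eq (h : AcceptsOnly P μ) (hψ : IsFAMMech q pr L ψ) (hμ : Feasible q μ)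
    (hL : ∀ i, i ∈ L) : ψ P = μ := by
  obtain ⟨μ₁, ⟨μ₀, hμ₀, himp, -, -⟩, hfair, -⟩ := hψ P
  rw [h.xiList_eq hμ hL, Set.mem_singleton_iff] at hμ₀
  subst hμ₀
  rw [Relation.reflTransGen_iff_eq fun ν => h.not_implementStep q] at himp
  subst himp
  exact (Relation.reflTransGen_iff_eq fun ν => h.not_fairStep pr).1 hfair

theorem nashEq_of_stable (h : AcceptsOnly P μ) (hψ : IsFAMMech q pr L ψ) {u : Prof I S}
    (hst : Stable u pr q μ) (hψP : ψ P = μ) : NashEq u ψ P := by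
  obtain ⟨-, hIR, hnw, hfair⟩ := hst
  intro i Pi
  set Q := Function.update P i Pi
  obtain ⟨hfeas, hQIR⟩ := hψ.irMech Q
  rw [hψP]
  rcases hνi : ψ Q i with _ | s
  · exact hIR i
  by_contra! hlt
  have hμi : μ i ≠ some s := fun e => hlt.ne (by rw [e])
  obtain ⟨j, hjμ, hjν⟩ := hfeas.exists_displaced (hnw i s hlt) hνi hμi
  have hji : j ≠ i := by rintro rfl; exact hμi hjμ
  have hQj : Q j = P j := Function.update_of_ne hji _ _
  have hνj : ψ Q j = none :=
    (h.eq_none_or_eq (hQj ▸ hQIR j)).resolve_right (hjμ ▸ hjν)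
  have hpr : pr.1 s j < pr.1 s i := by
    refine ((pr.2 s).ne hji).lt_or_gt.resolve_right fun hc => hψ.fairForUnassigned Q ?_
    exact ⟨j, s, i, hνj, hQj ▸ (h j s).2 hjμ.symm, hνi, hc⟩
  exact hfair ⟨i, s, j, hlt, hjμ, hpr⟩

end AcceptsOnly

theorem FAM_admits_equilibrium_general
    (q : S → ℕ) (pr : Prio I S) (L : List I)
    (hcomp : ∀ i : I, i ∈ L)
    (ψ : Mechanism I S) (hψ : IsFAMMech q pr L ψ)
    (u : Prof I S) (μ : Matching I S) (hst : Stable u pr q μ) :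
    ∀ P' : Prof I S,
      (∀ i s, (P' i).1 none < (P' i).1 (some s) ↔ some s = μ i) →
        ψ P' = μ ∧ NashEq u ψ P' := by
  intro P' hP'
  have hψP' : ψ P' = μ := AcceptsOnly.famMech_apply_eq hP' hψ hst.1 hcomp
  exact ⟨hψP', AcceptsOnly.nashEq_of_stable hP' hψ hst hψP'⟩

/-- for any FAM mechanism ψ and any stable matching μ of the
true problem, the profile where each student reports as acceptable exactly
their assignment under μ produces μ and is a Nash equilibrium; in
particular ψ admits a Nash equilibrium at every profile. -/
theorem FAM_admits_equilibrium
    (q : S → ℕ) (pr : Prio I S) (L : List I)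
    (hnd : L.Nodup) (hcomp : ∀ i : I, i ∈ L)
    (ψ : Mechanism I S) (hψ : IsFAMMech q pr L ψ)
    (u : Prof I S) (μ : Matching I S) (hst : Stable u pr q μ) :
    ∀ P' : Prof I S,
      (∀ i s, (P' i).1 none < (P' i).1 (some s) ↔ some s = μ i) →
        ψ P' = μ ∧ NashEq u ψ P' :=
  FAM_admits_equilibrium_general q pr L hcomp ψ hψ u μ hst
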